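/- arXiv:2407.06594 — 2 statements merged into one kernel-verified Lean document; each statement's English description precedes it below -/
import Mathlib

section
/- Let σ be a full-rank density matrix and ℒρ = −i[H,ρ] + VρV† − ½{V†V, ρ} a Lindbladian such that ‖σ^{1/4} H σ^{-1/4}‖ ≤ Λ, ‖σ^{1/4} V σ^{-1/4}‖² ≤ Λ, and ‖σ^{1/4} V† σ^{-1/4}‖² ≤ Λ. Then for every ρ, ‖ℒρ‖_{σ,−1/2} ≤ 5Λ ‖ρ‖_{σ,−1/2}, where ‖X‖_{σ,−1/2} := ‖σ^{−1/4} X σ^{−1/4}‖_F. -/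
open Matrix
open scoped ComplexOrder

variable {N : ℕ}

/-- The Frobenius norm `‖M‖_F = √Tr(M†M)`. -/
noncomputable def frobNorm (M : Matrix (Fin N) (Fin N) ℂ) : ℝ :=
  Real.sqrt ((Mᴴ * M).trace.re)

/-- The operator (spectral) norm of a matrix, via its action on `EuclideanSpace`. -/
noncomputable def specNorm (M : Matrix (Fin N) (Fin N) ℂ) : ℝ :=
  ‖Matrix.toEuclideanCLM (𝕜 := ℂ) M‖

/-- The Lindbladian `ℒρ = −i[H,ρ] + VρV† − ½{V†V, ρ}`. -/
noncomputable def lindbladian (H V ρ : Matrix (Fin N) (Fin N) ℂ) :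
    Matrix (Fin N) (Fin N) ℂ :=
  -Complex.I • (H * ρ - ρ * H) + V * ρ * Vᴴ - (1 / 2 : ℂ) • (Vᴴ * V * ρ + ρ * (Vᴴ * V))

/-!
Conjugating both sides by `s⁻¹ = σ^{-1/4}` turns every term of `ℒρ` into a sandwich `X A Y` with
`A = s⁻¹ ρ s⁻¹`; since `s` is Hermitian, each left factor is the adjoint of one of the similarity
transforms `s H s⁻¹`, `s V s⁻¹`, `s V† s⁻¹`, and adjoints have the same spectral norm. Then
`‖X A Y‖_F ≤ ‖X‖ ‖A‖_F ‖Y‖` bounds the Hamiltonian part by `2Λ`, the jump term by `Λ`, and,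
with `ab ≤ (a² + b²)/2`, the anticommutator by `Λ`.
-/

lemma re_trace_conjTranspose_mul_self {m n : Type*} [Fintype m] [Fintype n]
    (M : Matrix m n ℂ) : (Mᴴ * M).trace.re = ∑ i, ∑ j, ‖M i j‖ ^ 2 := by
  simp only [Matrix.trace, Matrix.diag, Matrix.mul_apply, Matrix.conjTranspose_apply,
    Complex.re_sum, Complex.star_def, Complex.conj_mul', ← Complex.ofReal_pow, Complex.ofReal_re]
  exact Finset.sum_comm

lemma specNorm_nonneg (M : Matrix (Fin N) (Fin N) ℂ) : 0 ≤ specNorm M := norm_nonneg _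

lemma frobNorm_nonneg (M : Matrix (Fin N) (Fin N) ℂ) : 0 ≤ frobNorm M := Real.sqrt_nonneg _

section L2

open scoped Matrix.Norms.L2Operator

lemma specNorm_conjTranspose (M : Matrix (Fin N) (Fin N) ℂ) : specNorm Mᴴ = specNorm M :=
  Matrix.l2_opNorm_conjTranspose M

lemma specNorm_mul_le (X Y : Matrix (Fin N) (Fin N) ℂ) :
    specNorm (X * Y) ≤ specNorm X * specNorm Y :=
  Matrix.l2_opNorm_mul X Y

end L2

section Frobenius

attribute [local instance] Matrix.frobeniusNormedAddCommGroup Matrix.frobeniusNormedSpace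

lemma frobNorm_eq_norm (M : Matrix (Fin N) (Fin N) ℂ) : frobNorm M = ‖M‖ := by
  rw [frobNorm, re_trace_conjTranspose_mul_self, Matrix.frobenius_norm_def, Real.sqrt_eq_rpow]
  norm_num

lemma frobNorm_add_le (X Y : Matrix (Fin N) (Fin N) ℂ) :
    frobNorm (X + Y) ≤ frobNorm X + frobNorm Y := by
  simpa only [frobNorm_eq_norm] using norm_add_le X Y

lemma frobNorm_sub_le (X Y : Matrix (Fin N) (Fin N) ℂ) :
    frobNorm (X - Y) ≤ frobNorm X + frobNorm Y := by
  simpa only [frobNorm_eq_norm] using norm_sub_le X Y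

lemma frobNorm_smul (c : ℂ) (X : Matrix (Fin N) (Fin N) ℂ) :
    frobNorm (c • X) = ‖c‖ * frobNorm X := by
  simpa only [frobNorm_eq_norm] using norm_smul c X

lemma frobNorm_conjTranspose (M : Matrix (Fin N) (Fin N) ℂ) : frobNorm Mᴴ = frobNorm M := by
  simpa only [frobNorm_eq_norm] using Matrix.frobenius_norm_conjTranspose M

end Frobenius

lemma frobNorm_sq_eq_sum_col (M : Matrix (Fin N) (Fin N) ℂ) :
    frobNorm M ^ 2 = ∑ j, ‖WithLp.toLp 2 (Mᵀ j)‖ ^ 2 := by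
  rw [frobNorm, Real.sq_sqrt (re_trace_conjTranspose_mul_self M ▸ by positivity),
    re_trace_conjTranspose_mul_self, Finset.sum_comm]
  simp [EuclideanSpace.norm_sq_eq]

lemma frobNorm_mul_le_left (X A : Matrix (Fin N) (Fin N) ℂ) :
    frobNorm (X * A) ≤ specNorm X * frobNorm A := by
  have hcol (j) : ‖WithLp.toLp 2 ((X * A)ᵀ j)‖ ≤ specNorm X * ‖WithLp.toLp 2 (Aᵀ j)‖ := by
    have : (X * A)ᵀ j = X *ᵥ Aᵀ j := rfl
    rw [this, ← Matrix.toEuclideanCLM_toLp]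
    exact (Matrix.toEuclideanCLM (𝕜 := ℂ) X).le_opNorm _
  refine le_of_sq_le_sq ?_ (mul_nonneg (specNorm_nonneg X) (frobNorm_nonneg A))
  rw [mul_pow, frobNorm_sq_eq_sum_col, frobNorm_sq_eq_sum_col, Finset.mul_sum]
  gcongr with j
  rw [← mul_pow]
  gcongr
  exact hcol j

lemma frobNorm_mul_le_right (A X : Matrix (Fin N) (Fin N) ℂ) :
    frobNorm (A * X) ≤ frobNorm A * specNorm X := by
  rw [← frobNorm_conjTranspose, conjTranspose_mul, mul_comm, ← frobNorm_conjTranspose A,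
    ← specNorm_conjTranspose X]
  exact frobNorm_mul_le_left _ _

lemma frobNorm_mul_mul_le (X A Y : Matrix (Fin N) (Fin N) ℂ) :
    frobNorm (X * A * Y) ≤ specNorm X * frobNorm A * specNorm Y :=
  (frobNorm_mul_le_right _ _).trans <| by
    gcongr
    · exact specNorm_nonneg Y
    · exact frobNorm_mul_le_left X A

/-- For `K = s H s⁻¹`, `V = s V s⁻¹`, `W = s V† s⁻¹` and `A = s⁻¹ ρ s⁻¹`, the left-hand side is
`s⁻¹ ℒ(ρ) s⁻¹` (`inv_mul_lindbladian_mul_inv`). -/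
lemma frobNorm_sandwiched_lindbladian_le (K V W A : Matrix (Fin N) (Fin N) ℂ) :
    frobNorm (-Complex.I • (Kᴴ * A - A * K) + Wᴴ * A * W
        - (1 / 2 : ℂ) • (Vᴴ * Wᴴ * A + A * W * V)) ≤
      (2 * specNorm K + specNorm W ^ 2 + specNorm W * specNorm V) * frobNorm A := by
  have hK : frobNorm (Kᴴ * A - A * K) ≤ 2 * specNorm K * frobNorm A := by
    calc _ ≤ specNorm Kᴴ * frobNorm A + frobNorm A * specNorm K :=
          (frobNorm_sub_le _ _).trans
            (add_le_add (frobNorm_mul_le_left _ _) (frobNorm_mul_le_right _ _))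
      _ = _ := by rw [specNorm_conjTranspose]; ring
  have hW : frobNorm (Wᴴ * A * W) ≤ specNorm W ^ 2 * frobNorm A := by
    calc _ ≤ specNorm Wᴴ * frobNorm A * specNorm W := frobNorm_mul_mul_le _ _ _
      _ = _ := by rw [specNorm_conjTranspose]; ring
  have hWV : frobNorm (Vᴴ * Wᴴ * A + A * W * V) ≤ 2 * (specNorm W * specNorm V) * frobNorm A := by
    calc _ ≤ specNorm (W * V)ᴴ * frobNorm A + frobNorm A * specNorm (W * V) := by
          rw [conjTranspose_mul, Matrix.mul_assoc A]
          exact (frobNorm_add_le _ _).trans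
            (add_le_add (frobNorm_mul_le_left _ _) (frobNorm_mul_le_right _ _))
      _ = 2 * specNorm (W * V) * frobNorm A := by rw [specNorm_conjTranspose]; ring
      _ ≤ _ := by gcongr; exacts [frobNorm_nonneg A, specNorm_mul_le W V]
  calc _ ≤ frobNorm (-Complex.I • (Kᴴ * A - A * K)) + frobNorm (Wᴴ * A * W)
        + frobNorm ((1 / 2 : ℂ) • (Vᴴ * Wᴴ * A + A * W * V)) :=
        (frobNorm_sub_le _ _).trans (add_le_add_left (frobNorm_add_le _ _) _)
    _ = frobNorm (Kᴴ * A - A * K) + frobNorm (Wᴴ * A * W)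
        + 1 / 2 * frobNorm (Vᴴ * Wᴴ * A + A * W * V) := by
        rw [frobNorm_smul, frobNorm_smul]
        norm_num
    _ ≤ _ := by linarith

lemma inv_mul_lindbladian_mul_inv {s H V : Matrix (Fin N) (Fin N) ℂ} (hs : s.IsHermitian)
    (hdet : IsUnit s.det) (hH : H.IsHermitian) (ρ : Matrix (Fin N) (Fin N) ℂ) :
    s⁻¹ * lindbladian H V ρ * s⁻¹ =
      -Complex.I • ((s * H * s⁻¹)ᴴ * (s⁻¹ * ρ * s⁻¹) - (s⁻¹ * ρ * s⁻¹) * (s * H * s⁻¹))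
        + (s * Vᴴ * s⁻¹)ᴴ * (s⁻¹ * ρ * s⁻¹) * (s * Vᴴ * s⁻¹)
        - (1 / 2 : ℂ) • ((s * V * s⁻¹)ᴴ * (s * Vᴴ * s⁻¹)ᴴ * (s⁻¹ * ρ * s⁻¹)
          + (s⁻¹ * ρ * s⁻¹) * (s * Vᴴ * s⁻¹) * (s * V * s⁻¹)) := by
  have hsinv : s * s⁻¹ = 1 := mul_nonsing_inv s hdet
  have hinvs : s⁻¹ * s = 1 := nonsing_inv_mul s hdet
  simp only [lindbladian, conjTranspose_mul, conjTranspose_conjTranspose, hs.eq, hs.inv.eq,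
    hH.eq, Matrix.mul_add, Matrix.add_mul, Matrix.mul_sub, Matrix.sub_mul, Matrix.mul_smul,
    Matrix.smul_mul, Matrix.mul_assoc, ← Matrix.mul_assoc s s⁻¹, ← Matrix.mul_assoc s⁻¹ s,
    hsinv, hinvs, Matrix.one_mul]

theorem lindbladian_weighted_l2_bound_general
    (s H V : Matrix (Fin N) (Fin N) ℂ) (hs : s.PosDef)
    (hH : H.IsHermitian) (Λ : ℝ)
    (hHΛ : specNorm (s * H * s⁻¹) ≤ Λ)
    (hVΛ : specNorm (s * V * s⁻¹) ^ 2 ≤ Λ)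
    (hVdΛ : specNorm (s * Vᴴ * s⁻¹) ^ 2 ≤ Λ)
    (ρ : Matrix (Fin N) (Fin N) ℂ) :
    frobNorm (s⁻¹ * lindbladian H V ρ * s⁻¹) ≤ 5 * Λ * frobNorm (s⁻¹ * ρ * s⁻¹) := by
  rw [inv_mul_lindbladian_mul_inv hs.isHermitian ((isUnit_iff_isUnit_det s).mp hs.isUnit) hH]
  refine (frobNorm_sandwiched_lindbladian_le _ _ _ _).trans ?_
  gcongr
  · exact frobNorm_nonneg _
  · nlinarith [sq_nonneg (specNorm (s * V * s⁻¹) - specNorm (s * Vᴴ * s⁻¹))]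

/-- Let `σ = s⁴` be a full-rank density matrix with positive-definite
quarter power `s = σ^{1/4}`, and let `ℒρ = −i[H,ρ] + VρV† − ½{V†V,ρ}` with
`‖σ^{1/4} H σ^{-1/4}‖ ≤ Λ`, `‖σ^{1/4} V σ^{-1/4}‖² ≤ Λ`, `‖σ^{1/4} V† σ^{-1/4}‖² ≤ Λ`.
Then `‖ℒρ‖_{σ,−1/2} ≤ 5Λ ‖ρ‖_{σ,−1/2}` with `‖X‖_{σ,−1/2} = ‖σ^{−1/4} X σ^{−1/4}‖_F`. -/
theorem lindbladian_weighted_l2_bound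
    (s σ H V : Matrix (Fin N) (Fin N) ℂ) (hs : s.PosDef)
    (hσ : σ = s * s * s * s) (htr : σ.trace = 1)
    (hH : H.IsHermitian) (Λ : ℝ)
    (hHΛ : specNorm (s * H * s⁻¹) ≤ Λ)
    (hVΛ : specNorm (s * V * s⁻¹) ^ 2 ≤ Λ)
    (hVdΛ : specNorm (s * Vᴴ * s⁻¹) ^ 2 ≤ Λ)
    (ρ : Matrix (Fin N) (Fin N) ℂ) :
    frobNorm (s⁻¹ * lindbladian H V ρ * s⁻¹) ≤ 5 * Λ * frobNorm (s⁻¹ * ρ * s⁻¹) :=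
  lindbladian_weighted_l2_bound_general s H V hs hH Λ hHΛ hVΛ hVdΛ ρ
end

section
/- Consider an irreducible, reversible Markov chain on a finite state space X with transition probabilities p_{ij} and stationary distribution π with π_j > 0 for all j. Then the spectral gap of the chain (1 minus the second-largest eigenvalue of the transition matrix) is bounded below by min_{i,j ∈ X} p_{ij}/π_j. -/
/-!
Let `δ = min_{i,j} p_{ij}/π_j`. Since `v` is orthogonal to `π`, the matrix `P` acts on `v` exactly as
`Q = P - δ 𝟙πᵀ` does, and `Q` has nonnegative entries and row sums `1 - δ`. Evaluating `Qv = μv` at a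
coordinate where `|v|` is maximal gives `|μ| ≤ 1 - δ`.
-/

open Finset

section

variable {X : Type*} [Fintype X]

theorem abs_sum_mul_le_sum_mul_of_nonneg {w v : X → ℝ} {M : ℝ} (hw : ∀ j, 0 ≤ w j)
    (hv : ∀ j, |v j| ≤ M) : |∑ j, w j * v j| ≤ (∑ j, w j) * M :=
  calc |∑ j, w j * v j| ≤ ∑ j, |w j * v j| := abs_sum_le_sum_abs _ _
    _ ≤ ∑ j, w j * M := by
      gcongr with j
      rw [abs_mul, abs_of_nonneg (hw j)]
      exact mul_le_mul_of_nonneg_left (hv j) (hw j)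
    _ = (∑ j, w j) * M := (sum_mul _ _ _).symm

theorem sum_sub_mul_mul_eq_of_sum_mul_eq_zero {p : X → X → ℝ} {π v : X → ℝ} {μ δ : ℝ} {i : X}
    (horth : ∑ j, π j * v j = 0) (heig : ∑ j, p i j * v j = μ * v i) :
    ∑ j, (p i j - δ * π j) * v j = μ * v i := by
  simp only [sub_mul, sum_sub_distrib, mul_assoc, ← mul_sum, horth, heig, mul_zero, sub_zero]

theorem abs_eigenvalue_le_one_sub_of_minorization {p : X → X → ℝ} {π v : X → ℝ} {μ δ : ℝ}
    (hδ : ∀ i j, δ * π j ≤ p i j) (hstoch : ∀ i, ∑ j, p i j = 1) (hπsum : ∑ i, π i = 1)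
    (hv : v ≠ 0) (horth : ∑ i, π i * v i = 0) (heig : ∀ i, ∑ j, p i j * v j = μ * v i) :
    |μ| ≤ 1 - δ := by
  obtain ⟨k, hk⟩ := Function.ne_iff.mp hv
  have : Nonempty X := ⟨k⟩
  obtain ⟨i, hi⟩ := Finite.exists_max fun j => |v j|
  have hvi : 0 < |v i| := (abs_pos.mpr hk).trans_le (hi k)
  have hrow : ∑ j, (p i j - δ * π j) = 1 - δ := by
    rw [sum_sub_distrib, hstoch, ← mul_sum, hπsum, mul_one]
  have hbound : |μ| * |v i| ≤ (1 - δ) * |v i| := by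
    rw [← abs_mul, ← sum_sub_mul_mul_eq_of_sum_mul_eq_zero horth (heig i), ← hrow]
    exact abs_sum_mul_le_sum_mul_of_nonneg (fun j => sub_nonneg.mpr (hδ i j)) hi
  exact le_of_mul_le_mul_right hbound hvi

end

theorem reversible_chain_spectral_gap_lower_bound_general
    {X : Type*} [Fintype X]
    (p : X → X → ℝ) (π : X → ℝ)
    (hstoch : ∀ i, ∑ j, p i j = 1)
    (hπpos : ∀ i, 0 < π i) (hπsum : ∑ i, π i = 1)
    (μ : ℝ) (v : X → ℝ) (hv : v ≠ 0)
    (horth : ∑ i, π i * v i = 0)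
    (heig : ∀ i, ∑ j, p i j * v j = μ * v i) :
    μ ≤ 1 - ⨅ q : X × X, p q.1 q.2 / π q.2 := by
  have hδ : ∀ i j, (⨅ q : X × X, p q.1 q.2 / π q.2) * π j ≤ p i j := fun i j =>
    (le_div_iff₀ (hπpos j)).mp (ciInf_le (Set.finite_range _).bddBelow (i, j))
  exact (le_abs_self μ).trans
    (abs_eigenvalue_le_one_sub_of_minorization hδ hstoch hπsum hv horth heig)

/-- For a fully connected, irreducible, reversible Markov chain `p` on a
finite state space with stationary distribution `π > 0`, every eigenvalue `μ` of the
transition matrix with eigenfunction orthogonal to constants in `ℓ²(π)` satisfies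
`μ ≤ 1 − min_{i,j} p_{ij}/π_j`; i.e., the spectral gap is at least `min_{i,j} p_{ij}/π_j`. -/
theorem reversible_chain_spectral_gap_lower_bound
    {X : Type*} [Fintype X] [Nonempty X]
    (p : X → X → ℝ) (π : X → ℝ)
    (hp : ∀ i j, 0 ≤ p i j) (hstoch : ∀ i, ∑ j, p i j = 1)
    (hπpos : ∀ i, 0 < π i) (hπsum : ∑ i, π i = 1)
    (hrev : ∀ i j, π i * p i j = π j * p j i)
    (hconn : ∀ i j, i ≠ j → 0 < p i j)
    (μ : ℝ) (v : X → ℝ) (hv : v ≠ 0)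
    (horth : ∑ i, π i * v i = 0)
    (heig : ∀ i, ∑ j, p i j * v j = μ * v i) :
    μ ≤ 1 - ⨅ q : X × X, p q.1 q.2 / π q.2 :=
  reversible_chain_spectral_gap_lower_bound_general p π hstoch hπpos hπsum μ v hv horth heig
end
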